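/- Let D be a divisor on H and f₁, f₂ : V(G) → ℤ, and set f := f₁ + f₂. Let f̃ and f̃₁ be the canonical extensions of f and f₁ with respect to D, and let f̃₂ be the canonical extension of f₂ with respect to the divisor D₁ := D + div_ℓ(f₁;D). Then f̃₁ + f̃₂ = f̃; in particular, div_ℓ(f;D) = div_ℓ(f₁;D) + div_ℓ(f₂;D₁). -/
import Mathlib


open Finset
open scoped Classical

structure Multigraph (V E : Type) where
  tail : E → V
  head : E → V
  loopless : ∀ e, tail e ≠ head e

namespace Multigraph

variable {V E : Type}

/-- The simple graph of adjacency underlying a multigraph. -/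
def adjG (G : Multigraph V E) : SimpleGraph V :=
  SimpleGraph.fromRel (fun u v => ∃ e, G.tail e = u ∧ G.head e = v)

/-- A multigraph is connected if its adjacency graph is. -/
def Conn (G : Multigraph V E) : Prop := G.adjG.Connected

end Multigraph

variable {V E : Type} [Fintype V] [Fintype E] [DecidableEq V] [DecidableEq E]

/-- The vertex set of the subdivision `H` of `G`: the vertices of `G` together with,
for each edge `e`, the `ℓ e − 1` interior vertices `x_1^e, …, x_{ℓ_e − 1}^e` of the
subdivision of `e` (the pair `⟨e, j⟩` encodes `x_{j+1}^e`, indexed along the reference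
orientation of `e`). -/
abbrev VH (V E : Type) (ℓ : E → ℕ) := V ⊕ (Σ e : E, Fin (ℓ e - 1))

/-- The vertex `x_j^e` of `H` (along the reference orientation of `e`),
for `0 ≤ j ≤ ℓ e`. -/
def xv (G : Multigraph V E) (ℓ : E → ℕ) (e : E) (j : ℕ) : VH V E ℓ :=
  if h : j = 0 then Sum.inl (G.tail e)
  else if h2 : j < ℓ e then Sum.inr ⟨e, ⟨j - 1, by omega⟩⟩
  else Sum.inl (G.head e)

/-- The principal divisor `div(F)` on `H` of a function `F : V(H) → ℤ`; its value at a
vertex `w` is `ord_w(F) = Σ (F(u) − F(w))`, the sum being over the edges of `H` between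
`u` and `w`. The edges of `H` are the pairs `{x_j^e, x_{j+1}^e}` for `0 ≤ j < ℓ e`. -/
def divH (G : Multigraph V E) (ℓ : E → ℕ) (F : VH V E ℓ → ℤ) (w : VH V E ℓ) : ℤ :=
  ∑ e : E, ∑ j ∈ Finset.range (ℓ e),
    ((if xv G ℓ e j = w then F (xv G ℓ e (j + 1)) - F (xv G ℓ e j) else 0) +
     (if xv G ℓ e (j + 1) = w then F (xv G ℓ e j) - F (xv G ℓ e (j + 1)) else 0))

/-- A divisor `D` on `H` is `G`-admissible if, for every edge `e` of `G`, `D` vanishes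
at all interior vertices of the subdivision of `e`, except at most one where it
takes the value `1`. -/
def GAdm (G : Multigraph V E) (ℓ : E → ℕ) (D : VH V E ℓ → ℤ) : Prop :=
  ∀ e : E,
    (∀ j : Fin (ℓ e - 1), D (Sum.inr ⟨e, j⟩) = 0) ∨
    (∃ j : Fin (ℓ e - 1), D (Sum.inr ⟨e, j⟩) = 1 ∧
      ∀ j' : Fin (ℓ e - 1), j' ≠ j → D (Sum.inr ⟨e, j'⟩) = 0)

/-- `F : V(H) → ℤ` is the canonical extension of `f : V(G) → ℤ` with respect to the
divisor `D` on `H`: it extends `f` and `D + div(F)` is `G`-admissible. -/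
def IsCanExt (G : Multigraph V E) (ℓ : E → ℕ) (D : VH V E ℓ → ℤ) (f : V → ℤ)
    (F : VH V E ℓ → ℤ) : Prop :=
  (∀ v : V, F (Sum.inl v) = f v) ∧ GAdm G ℓ (fun w => D w + divH G ℓ F w)


set_option linter.unusedSectionVars false
set_option maxHeartbeats 1000000

section Aux

lemma small_mult (n : ℕ) (x c : ℤ) (h : (n:ℤ) * x = c) (h1 : -(n:ℤ) < c) (h2 : c < n) :
    x = 0 ∧ c = 0 := by
  have hx : x = 0 := by
    by_contra hx
    rcases lt_or_gt_of_ne hx with hlt | hgt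
    · have h3 : x ≤ -1 := by omega
      have h4 : (n:ℤ) * x ≤ (n:ℤ) * (-1) := by
        apply mul_le_mul_of_nonneg_left h3 (by positivity)
      rw [mul_neg_one] at h4
      omega
    · have h3 : 1 ≤ x := by omega
      have h4 : (n:ℤ) * 1 ≤ (n:ℤ) * x := by
        apply mul_le_mul_of_nonneg_left h3 (by positivity)
      rw [mul_one] at h4
      omega
  refine ⟨hx, ?_⟩
  rw [hx, mul_zero] at h
  omega

lemma sum_indicator (n p : ℕ) (hp : p < n) :
    ∑ j ∈ Finset.range n, (if p < j then (1:ℤ) else 0) = (n:ℤ) - p - 1 := by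
  induction n with
  | zero => omega
  | succ n ih =>
    rw [Finset.sum_range_succ]
    rcases Nat.lt_or_ge p n with h | h
    · rw [ih h, if_pos h]; push_cast; ring
    · have hpn : p = n := by omega
      subst hpn
      rw [Finset.sum_eq_zero, if_neg (lt_irrefl p)]
      · push_cast; ring
      · intro j hj
        rw [if_neg]
        simp only [Finset.mem_range] at hj
        omega

lemma partial_sum_single (n p : ℕ) (a : ℕ → ℤ) (hp : p < n - 1) (hap : a p = 1)
    (h0 : ∀ j, j < n - 1 → j ≠ p → a j = 0) :
    ∀ j, j ≤ n - 1 → ∑ i ∈ Finset.range j, a i = if p < j then 1 else 0 := by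
  intro j hj
  induction j with
  | zero => simp
  | succ j ih =>
    rw [Finset.sum_range_succ, ih (by omega)]
    by_cases hjp : j = p
    · subst hjp
      rw [hap, if_neg (lt_irrefl j), if_pos (by omega)]; ring
    · rw [h0 j (by omega) hjp]
      have : (p < j + 1) ↔ (p < j) := by omega
      rw [if_congr this rfl rfl]
      ring

lemma key (n : ℕ) (hn : 0 < n) (g a b : ℕ → ℤ)
    (hg0 : g 0 = 0) (hgn : g n = 0)
    (hsec : ∀ j, j < n - 1 → g j + g (j + 2) - 2 * g (j + 1) = a j - b j)
    (ha : (∀ j, j < n - 1 → a j = 0) ∨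
      ∃ p, p < n - 1 ∧ a p = 1 ∧ ∀ j, j < n - 1 → j ≠ p → a j = 0)
    (hb : (∀ j, j < n - 1 → b j = 0) ∨
      ∃ q, q < n - 1 ∧ b q = 1 ∧ ∀ j, j < n - 1 → j ≠ q → b j = 0) :
    ∀ j, j ≤ n → g j = 0 := by
  set d : ℕ → ℤ := fun j => g (j + 1) - g j with hd
  have hdsum : ∑ j ∈ Finset.range n, d j = 0 := by
    have := Finset.sum_range_sub g n
    simp only [hd]
    omega
  have hdrec : ∀ j, j < n →
      d j = d 0 + (∑ i ∈ Finset.range j, a i) - (∑ i ∈ Finset.range j, b i) := by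
    intro j hj
    induction j with
    | zero => simp
    | succ j ih =>
      have hj' : j < n - 1 := by omega
      have hs := hsec j hj'
      have hdj := ih (by omega)
      rw [Finset.sum_range_succ, Finset.sum_range_succ]
      have hstep : d (j + 1) - d j = a j - b j := by
        simp only [hd]; linarith
      linarith
  -- Sa values
  have hSa : ∀ (c : ℕ → ℤ),
      ((∀ j, j < n - 1 → c j = 0) ∨
        ∃ p, p < n - 1 ∧ c p = 1 ∧ ∀ j, j < n - 1 → j ≠ p → c j = 0) →
      ∃ u : ℤ, (∑ j ∈ Finset.range n, ∑ i ∈ Finset.range j, c i) = u ∧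
        0 ≤ u ∧ u ≤ (n:ℤ) - 1 ∧
        ((u = 0 ∧ ∀ j, j < n → ∑ i ∈ Finset.range j, c i = 0) ∨
          (∃ p : ℕ, p < n - 1 ∧ u = (n:ℤ) - p - 1 ∧
            ∀ j, j < n → ∑ i ∈ Finset.range j, c i = if p < j then 1 else 0)) := by
    intro c hc
    rcases hc with h0 | ⟨p, hp, hcp, h0⟩
    · refine ⟨0, ?_, le_refl 0, by omega, Or.inl ⟨rfl, ?_⟩⟩
      · apply Finset.sum_eq_zero
        intro j hj
        apply Finset.sum_eq_zero
        intro i hi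
        simp only [Finset.mem_range] at hj hi
        exact h0 i (by omega)
      · intro j hj
        apply Finset.sum_eq_zero
        intro i hi
        simp only [Finset.mem_range] at hi
        exact h0 i (by omega)
    · have hps : ∀ j, j < n → ∑ i ∈ Finset.range j, c i = if p < j then 1 else 0 := by
        intro j hj
        exact partial_sum_single n p c hp hcp h0 j (by omega)
      refine ⟨(n:ℤ) - p - 1, ?_, by omega, by omega,
        Or.inr ⟨p, hp, rfl, hps⟩⟩
      rw [Finset.sum_congr rfl (fun j hj => hps j (Finset.mem_range.mp hj))]
      exact sum_indicator n p (by omega)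
  obtain ⟨u, hu, hu0, hu1, hucase⟩ := hSa a ha
  obtain ⟨w, hw, hw0, hw1, hwcase⟩ := hSa b hb
  -- total
  have htot : (n:ℤ) * d 0 + u - w = 0 := by
    have : ∑ j ∈ Finset.range n, d j =
        ∑ j ∈ Finset.range n, (d 0 + (∑ i ∈ Finset.range j, a i) - (∑ i ∈ Finset.range j, b i)) := by
      apply Finset.sum_congr rfl
      intro j hj
      exact hdrec j (Finset.mem_range.mp hj)
    rw [hdsum] at this
    simp only [sub_eq_add_neg, Finset.sum_add_distrib, Finset.sum_const, Finset.card_range,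
      nsmul_eq_mul, Finset.sum_neg_distrib] at this
    rw [hu, hw] at this
    linarith
  have hd0uw : d 0 = 0 ∧ u = w := by
    have := small_mult n (d 0) (w - u) (by linarith) (by omega) (by omega)
    exact ⟨this.1, by omega⟩
  obtain ⟨hd00, huw⟩ := hd0uw
  -- pointwise d = 0
  have hdz : ∀ j, j < n → d j = 0 := by
    intro j hj
    rw [hdrec j hj, hd00]
    rcases hucase with ⟨hu0', hpa⟩ | ⟨p, hp, hup, hpa⟩ <;>
      rcases hwcase with ⟨hw0', hpb⟩ | ⟨q, hq, hwq, hpb⟩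
    · rw [hpa j hj, hpb j hj]; ring
    · exfalso; omega
    · exfalso; omega
    · have hpq : p = q := by omega
      subst hpq
      rw [hpa j hj, hpb j hj]; ring
  -- conclude
  intro j hj
  induction j with
  | zero => exact hg0
  | succ j ih =>
    have := hdz j (by omega)
    simp only [hd] at this
    have := ih (by omega)
    omega

lemma xv_zero (G : Multigraph V E) (ℓ : E → ℕ) (e : E) :
    xv G ℓ e 0 = Sum.inl (G.tail e) := by simp [xv]

lemma xv_last (G : Multigraph V E) (ℓ : E → ℕ) (e : E) (h : 0 < ℓ e) :
    xv G ℓ e (ℓ e) = Sum.inl (G.head e) := by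
  rw [xv, dif_neg (by omega), dif_neg (by omega)]

lemma xv_succ (G : Multigraph V E) (ℓ : E → ℕ) (e : E) (j : ℕ) (hj : j < ℓ e - 1) :
    xv G ℓ e (j + 1) = Sum.inr ⟨e, ⟨j, hj⟩⟩ := by
  rw [xv, dif_neg (Nat.succ_ne_zero j), dif_pos (by omega)]
  simp

lemma xv_eq_inr_iff (G : Multigraph V E) (ℓ : E → ℕ) (e e' : E) (i : ℕ)
    (j : Fin (ℓ e' - 1)) :
    xv G ℓ e i = Sum.inr ⟨e', j⟩ ↔ e = e' ∧ i = (j : ℕ) + 1 := by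
  have hj := j.isLt
  rw [xv]
  split_ifs with h1 h2
  · constructor
    · intro h; exact absurd h (by simp)
    · rintro ⟨rfl, h⟩; omega
  · constructor
    · intro h
      rw [Sum.inr.injEq, Sigma.mk.inj_iff] at h
      obtain ⟨rfl, hh⟩ := h
      rw [heq_iff_eq] at hh
      have := congrArg Fin.val hh
      simp only [Fin.val_mk] at this
      exact ⟨rfl, by omega⟩
    · rintro ⟨rfl, rfl⟩
      rw [Sum.inr.injEq, Sigma.mk.inj_iff]
      refine ⟨rfl, heq_of_eq ?_⟩
      ext
      simp
  · constructor
    · intro h; exact absurd h (by simp)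
    · rintro ⟨rfl, rfl⟩
      exact absurd hj (by omega)

lemma divH_interior (G : Multigraph V E) (ℓ : E → ℕ) (F : VH V E ℓ → ℤ) (e : E)
    (j : Fin (ℓ e - 1)) :
    divH G ℓ F (Sum.inr ⟨e, j⟩) =
      F (xv G ℓ e j) + F (xv G ℓ e ((j : ℕ) + 2)) - 2 * F (xv G ℓ e ((j : ℕ) + 1)) := by
  have hj := j.isLt
  rw [divH, Finset.sum_eq_single e]
  · simp only [xv_eq_inr_iff, true_and]
    have hcong : ∀ i ∈ Finset.range (ℓ e),
        ((if i = (j:ℕ) + 1 then F (xv G ℓ e (i + 1)) - F (xv G ℓ e i) else 0) +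
         (if i + 1 = (j:ℕ) + 1 then F (xv G ℓ e i) - F (xv G ℓ e (i + 1)) else 0)) =
        ((if i = (j:ℕ) + 1 then F (xv G ℓ e (i + 1)) - F (xv G ℓ e i) else 0) +
         (if i = (j:ℕ) then F (xv G ℓ e i) - F (xv G ℓ e (i + 1)) else 0)) := by
      intro i _
      congr 1
      apply if_congr (by omega) rfl rfl
    rw [Finset.sum_congr rfl hcong, Finset.sum_add_distrib,
      Finset.sum_ite_eq' (Finset.range (ℓ e)) ((j:ℕ) + 1),
      Finset.sum_ite_eq' (Finset.range (ℓ e)) (j:ℕ),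
      if_pos (Finset.mem_range.mpr (by omega)), if_pos (Finset.mem_range.mpr (by omega))]
    ring
  · intro e' _ hne
    apply Finset.sum_eq_zero
    intro i _
    rw [if_neg, if_neg, add_zero]
    · rw [xv_eq_inr_iff]; rintro ⟨rfl, -⟩; exact hne rfl
    · rw [xv_eq_inr_iff]; rintro ⟨rfl, -⟩; exact hne rfl
  · intro h
    exact absurd (Finset.mem_univ e) h

lemma divH_add (G : Multigraph V E) (ℓ : E → ℕ) (F F' : VH V E ℓ → ℤ) (w : VH V E ℓ) :
    divH G ℓ (fun x => F x + F' x) w = divH G ℓ F w + divH G ℓ F' w := by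
  rw [divH, divH, divH, ← Finset.sum_add_distrib]
  apply Finset.sum_congr rfl
  intro e _
  rw [← Finset.sum_add_distrib]
  apply Finset.sum_congr rfl
  intro i _
  split_ifs <;> ring

lemma canExt_unique (G : Multigraph V E) (ℓ : E → ℕ) (hℓ : ∀ e, 0 < ℓ e)
    (D : VH V E ℓ → ℤ) (f : V → ℤ) (F F' : VH V E ℓ → ℤ)
    (h : IsCanExt G ℓ D f F) (h' : IsCanExt G ℓ D f F') : ∀ w, F w = F' w := by
  have hedge : ∀ e : E, ∀ j, j ≤ ℓ e → F (xv G ℓ e j) = F' (xv G ℓ e j) := by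
    intro e
    set a : ℕ → ℤ := fun j =>
      if hj : j < ℓ e - 1 then
        D (Sum.inr ⟨e, ⟨j, hj⟩⟩) + divH G ℓ F (Sum.inr ⟨e, ⟨j, hj⟩⟩) else 0 with hadef
    set b : ℕ → ℤ := fun j =>
      if hj : j < ℓ e - 1 then
        D (Sum.inr ⟨e, ⟨j, hj⟩⟩) + divH G ℓ F' (Sum.inr ⟨e, ⟨j, hj⟩⟩) else 0 with hbdef
    have hmain := key (ℓ e) (hℓ e) (fun k => F (xv G ℓ e k) - F' (xv G ℓ e k)) a b
      (by show F (xv G ℓ e 0) - F' (xv G ℓ e 0) = 0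
          rw [xv_zero, h.1, h'.1, sub_self])
      (by show F (xv G ℓ e (ℓ e)) - F' (xv G ℓ e (ℓ e)) = 0
          rw [xv_last G ℓ e (hℓ e), h.1, h'.1, sub_self])
      (by
        intro j hj
        have e1 := divH_interior G ℓ F e ⟨j, hj⟩
        have e2 := divH_interior G ℓ F' e ⟨j, hj⟩
        simp only [Fin.val_mk] at e1 e2
        simp only [hadef, hbdef, dif_pos hj]
        linarith)
      (by
        rcases h.2 e with hall | ⟨p, hp1, hp0⟩
        · left; intro j hj
          simp only [hadef, dif_pos hj]
          exact hall ⟨j, hj⟩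
        · right
          refine ⟨p.val, p.isLt, ?_, ?_⟩
          · simp only [hadef, dif_pos p.isLt]
            exact hp1
          · intro j hj hne
            simp only [hadef, dif_pos hj]
            exact hp0 ⟨j, hj⟩ (fun hh => hne (by simpa using congrArg Fin.val hh)))
      (by
        rcases h'.2 e with hall | ⟨p, hp1, hp0⟩
        · left; intro j hj
          simp only [hbdef, dif_pos hj]
          exact hall ⟨j, hj⟩
        · right
          refine ⟨p.val, p.isLt, ?_, ?_⟩
          · simp only [hbdef, dif_pos p.isLt]
            exact hp1
          · intro j hj hne
            simp only [hbdef, dif_pos hj]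
            exact hp0 ⟨j, hj⟩ (fun hh => hne (by simpa using congrArg Fin.val hh)))
    intro j hj
    have := hmain j hj
    simpa [sub_eq_zero] using this
  intro w
  cases w with
  | inl v => rw [h.1 v, h'.1 v]
  | inr s =>
    obtain ⟨e, j⟩ := s
    have hle : j.val + 1 ≤ ℓ e := by have := j.isLt; omega
    have := hedge e (j.val + 1) hle
    rw [xv_succ G ℓ e j.val j.isLt] at this
    exact this

end Aux

/-- let `canExt D f` denote the canonical extension of `f` with respect
to `D`. Let `D` be a divisor on `H`, `f₁, f₂ : V(G) → ℤ` and `f = f₁ + f₂`. Let `f̃`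
and `f̃₁` be the canonical extensions of `f` and `f₁` with respect to `D`, and `f̃₂`
the canonical extension of `f₂` with respect to `D₁ = D + div_ℓ(f₁; D)`. Then
`f̃₁ + f̃₂ = f̃`; in particular `div_ℓ(f; D) = div_ℓ(f₁; D) + div_ℓ(f₂; D₁)`. -/
theorem stmt3 (G : Multigraph V E) (hG : G.Conn) (ℓ : E → ℕ) (hℓ : ∀ e, 0 < ℓ e)
    (canExt : (VH V E ℓ → ℤ) → (V → ℤ) → (VH V E ℓ → ℤ))
    (hcan : ∀ (D : VH V E ℓ → ℤ) (f : V → ℤ), IsCanExt G ℓ D f (canExt D f))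
    (D : VH V E ℓ → ℤ) (f₁ f₂ : V → ℤ) :
    (∀ w, canExt D f₁ w + canExt (fun w' => D w' + divH G ℓ (canExt D f₁) w') f₂ w =
      canExt D (f₁ + f₂) w) ∧
    (∀ w, divH G ℓ (canExt D (f₁ + f₂)) w =
      divH G ℓ (canExt D f₁) w +
      divH G ℓ (canExt (fun w' => D w' + divH G ℓ (canExt D f₁) w') f₂) w) := by
  have h1 := hcan D f₁
  have h2 := hcan (fun w' => D w' + divH G ℓ (canExt D f₁) w') f₂
  have h := hcan D (f₁ + f₂)
  have hsum : IsCanExt G ℓ D (f₁ + f₂)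
      (fun w => canExt D f₁ w +
        canExt (fun w' => D w' + divH G ℓ (canExt D f₁) w') f₂ w) := by
    constructor
    · intro v
      show canExt D f₁ (Sum.inl v) + _ = _
      rw [h1.1 v, h2.1 v, Pi.add_apply]
    · show GAdm G ℓ _
      have hfe : (fun w => D w + divH G ℓ (fun x => canExt D f₁ x +
            canExt (fun w' => D w' + divH G ℓ (canExt D f₁) w') f₂ x) w)
          = (fun w => (D w + divH G ℓ (canExt D f₁) w) +
            divH G ℓ (canExt (fun w' => D w' + divH G ℓ (canExt D f₁) w') f₂) w) := by
        funext w
        rw [divH_add]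
        ring
      rw [hfe]
      exact h2.2
  have huniq := canExt_unique G ℓ hℓ D (f₁ + f₂) _ _ hsum h
  constructor
  · intro w
    exact huniq w
  · intro w
    have hfun : canExt D (f₁ + f₂) = fun x => canExt D f₁ x +
        canExt (fun w' => D w' + divH G ℓ (canExt D f₁) w') f₂ x :=
      funext (fun x => (huniq x).symm)
    rw [hfun, divH_add]
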